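/- Let f : ℝ → ℝ be twice continuously differentiable and let s > 0. For a > 0 and r > 0 define φ_a(r) := (a/√(2πr³)) · exp(−a²/(2r)). For 0 ≤ t < τ and a, b ∈ ℝ define H(t,a;τ,b) := (2π(τ−t))^{-1/2} · exp( (1/2)∫_t^τ f′(u)² du − f′(τ)·b + f′(t)·a ) · [ exp( −(b − a − ∫_t^τ f′(u) du)²/(2(τ−t)) ) − exp( −(b + a − ∫_t^τ f′(u) du)²/(2(τ−t)) ) ], and for 0 ≤ t < τ < s and a, b > 0 define G(t,a;τ,b) := (φ_b(s−τ)/φ_a(s−t)) · H(t,a;τ,b). Then for every τ ∈ (0,s), every a > 0, and every bounded continuous function g : [0,∞) → ℝ, the integral ∫₀^∞ G(t,a;τ,b)·g(b) db converges to g(a) as t → τ from the left. -/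

import Mathlib

/-!
For `b > 0` the integrand factors as `G(t,a;τ,b) g(b) = β(t) (p₊ - p₋)(b) w(b)`, where `p₊`, `p₋`
are the Gaussian densities of variance `τ - t` centred at `±a + ∫_t^τ f'`,
`w(b) = φ_b(s-τ) e^{-f'(τ) b} g(b)` is bounded and continuous on `(0,∞)`, and
`β(t) = exp(½∫_t^τ f'² + f'(t) a) / φ_a(s-t)`. Extending `w` by zero to `(-∞,0]`, both integrals
become Gaussian expectations; writing the Gaussians as affine images of the standard one, dominated
convergence shows they tend to `w(a)` and `w(-a) = 0`. Hence the limit is `β(τ) w(a) = g(a)`.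
-/

open Real MeasureTheory ProbabilityTheory Filter Set
open scoped Topology NNReal

lemma gaussianReal_eq_map_standard (m : ℝ) (v : ℝ≥0) :
    gaussianReal m v = (gaussianReal 0 1).map (fun y => m + √(v : ℝ) * y) := by
  have : (fun y => m + √(v : ℝ) * y) = (· + m) ∘ (√(v : ℝ) * ·) := by
    ext; simp [add_comm]
  rw [this, ← Measure.map_map (by fun_prop) (by fun_prop), gaussianReal_map_const_mul,
    gaussianReal_map_add_const]
  congr 1
  · simp
  · ext; simp

theorem tendsto_integral_gaussianReal {ι : Type*} {l : Filter ι} [l.IsCountablyGenerated]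
    {F : ℝ → ℝ} {x₀ C : ℝ} (hFm : Measurable F) (hFC : ∀ x, |F x| ≤ C)
    (hF : ContinuousAt F x₀) {m : ι → ℝ} {v : ι → ℝ≥0} (hm : Tendsto m l (𝓝 x₀))
    (hv : Tendsto v l (𝓝 0)) :
    Tendsto (fun i => ∫ x, F x ∂gaussianReal (m i) (v i)) l (𝓝 (F x₀)) := by
  have hmeas : ∀ i, Measurable fun y => m i + √(v i : ℝ) * y := fun i => by fun_prop
  have hmap : ∀ i, ∫ x, F x ∂gaussianReal (m i) (v i)
      = ∫ y, F (m i + √(v i : ℝ) * y) ∂gaussianReal 0 1 := fun i => by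
    rw [gaussianReal_eq_map_standard, integral_map (hmeas i).aemeasurable
      hFm.aestronglyMeasurable]
  simp_rw [hmap]
  have hsqrt : Tendsto (fun i => √(v i : ℝ)) l (𝓝 0) := by
    simpa using ((NNReal.continuous_coe.tendsto 0).comp hv).sqrt
  have hlim : ∀ y, Tendsto (fun i => m i + √(v i : ℝ) * y) l (𝓝 x₀) := fun y => by
    simpa using hm.add (hsqrt.mul_const y)
  simpa using tendsto_integral_filter_of_dominated_convergence (μ := gaussianReal 0 1)
    (fun _ => C)
    (.of_forall fun i => (hFm.comp (hmeas i)).aestronglyMeasurable)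
    (.of_forall fun i => ae_of_all _ fun y => hFC _) (integrable_const C)
    (ae_of_all _ fun y => hF.tendsto.comp (hlim y))

lemma setIntegral_gaussianPDFReal_sub_mul {S : Set ℝ} (hS : MeasurableSet S) {w : ℝ → ℝ}
    {C : ℝ} (hwm : Measurable (S.indicator w)) (hwC : ∀ x, |S.indicator w x| ≤ C)
    (m₁ m₂ : ℝ) {v : ℝ≥0} (hv : v ≠ 0) :
    ∫ x in S, (gaussianPDFReal m₁ v x - gaussianPDFReal m₂ v x) * w x
      = ∫ x, S.indicator w x ∂gaussianReal m₁ v - ∫ x, S.indicator w x ∂gaussianReal m₂ v := by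
  have hint : ∀ m, Integrable fun x => gaussianPDFReal m v x * S.indicator w x := fun m =>
    (integrable_gaussianPDFReal m v).mul_bdd hwm.aestronglyMeasurable (ae_of_all _ hwC)
  rw [integral_gaussianReal_eq_integral_smul hv, integral_gaussianReal_eq_integral_smul hv,
    ← integral_indicator hS]
  simp only [smul_eq_mul]
  rw [← integral_sub (hint m₁) (hint m₂)]
  congr 1 with x
  by_cases hx : x ∈ S <;> simp [hx, sub_mul]

theorem tendsto_setIntegral_Ioi_gaussianPDFReal_sub_mul {ι : Type*} {l : Filter ι}
    [l.IsCountablyGenerated] {w : ℝ → ℝ} {C : ℝ} (hw : ContinuousOn w (Ioi 0))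
    (hwC : ∀ x, 0 < x → |w x| ≤ C) {x₀ : ℝ} (hx₀ : 0 < x₀) {m : ι → ℝ} {v : ι → ℝ≥0}
    (hm : Tendsto m l (𝓝 0)) (hv : Tendsto v l (𝓝[≠] 0)) :
    Tendsto (fun i => ∫ x in Ioi 0,
        (gaussianPDFReal (x₀ + m i) (v i) x - gaussianPDFReal (m i - x₀) (v i) x) * w x)
      l (𝓝 (w x₀)) := by
  have hFm : Measurable ((Ioi 0).indicator w) := by
    rw [← piecewise_eq_indicator]
    exact hw.measurable_piecewise continuousOn_const measurableSet_Ioi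
  have hFC : ∀ x, |(Ioi 0).indicator w x| ≤ C := by
    intro x
    by_cases hx : 0 < x
    · simpa [hx] using hwC x hx
    · simpa [hx] using (abs_nonneg _).trans (hwC x₀ hx₀)
  have hF_pos : ContinuousAt ((Ioi 0).indicator w) x₀ :=
    (hw.continuousAt (Ioi_mem_nhds hx₀)).congr
      (eventually_of_mem (Ioi_mem_nhds hx₀) fun x hx => (indicator_of_mem hx w).symm)
  have hF_neg : ContinuousAt ((Ioi 0).indicator w) (-x₀) :=
    continuousAt_const.congr (eventually_of_mem (Iio_mem_nhds (neg_neg_iff_pos.2 hx₀))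
      fun x hx => (indicator_of_notMem (not_lt.2 (le_of_lt hx)) w).symm)
  have hv' := hv.mono_right nhdsWithin_le_nhds
  have h_pos := tendsto_integral_gaussianReal hFm hFC hF_pos (by simpa using hm.const_add x₀) hv'
  have h_neg := tendsto_integral_gaussianReal hFm hFC hF_neg (by simpa using hm.sub_const x₀) hv'
  have hF_sub : (Ioi 0).indicator w x₀ - (Ioi 0).indicator w (-x₀) = w x₀ := by
    simp [hx₀, hx₀.le]
  rw [← hF_sub]
  refine (h_pos.sub h_neg).congr' (eventually_of_mem (hv self_mem_nhdsWithin) fun i hi => ?_)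
  exact (setIntegral_gaussianPDFReal_sub_mul measurableSet_Ioi hFm hFC _ _ hi).symm

/-- The paper's `φ_a(r)`: the density at time `r` of the first hitting time of level `a` by a
standard Brownian motion. -/
noncomputable def hittingTimeDensity (a r : ℝ) : ℝ :=
  a / √(2 * π * r ^ 3) * exp (-a ^ 2 / (2 * r))

lemma hittingTimeDensity_pos {a r : ℝ} (ha : 0 < a) (hr : 0 < r) :
    0 < hittingTimeDensity a r := by
  have := sqrt_pos.2 (by positivity : 0 < 2 * π * r ^ 3)
  unfold hittingTimeDensity
  positivity

lemma continuousAt_hittingTimeDensity (a : ℝ) {r : ℝ} (hr : 0 < r) :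
    ContinuousAt (hittingTimeDensity a) r := by
  have := (sqrt_pos.2 (by positivity : 0 < 2 * π * r ^ 3)).ne'
  unfold hittingTimeDensity
  fun_prop (disch := positivity)

lemma continuous_hittingTimeDensity_left (r : ℝ) :
    Continuous fun a => hittingTimeDensity a r := by
  unfold hittingTimeDensity
  fun_prop

lemma hittingTimeDensity_mul_exp_le {r : ℝ} (hr : 0 < r) (k b : ℝ) :
    hittingTimeDensity b r * exp (k * b) ≤ exp ((k + 1) ^ 2 * r / 2) / √(2 * π * r ^ 3) := by
  have hsq := sqrt_pos.2 (by positivity : 0 < 2 * π * r ^ 3)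
  have hexp : -b ^ 2 / (2 * r) + k * b + b ≤ (k + 1) ^ 2 * r / 2 := by
    have : (k + 1) ^ 2 * r / 2 - (-b ^ 2 / (2 * r) + k * b + b)
        = (b - (k + 1) * r) ^ 2 / (2 * r) := by
      field_simp; ring
    nlinarith [div_nonneg (sq_nonneg (b - (k + 1) * r)) (by positivity : (0:ℝ) ≤ 2 * r)]
  unfold hittingTimeDensity
  calc b / √(2 * π * r ^ 3) * exp (-b ^ 2 / (2 * r)) * exp (k * b)
      ≤ exp b / √(2 * π * r ^ 3) * exp (-b ^ 2 / (2 * r)) * exp (k * b) := by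
        gcongr; linarith [add_one_le_exp b]
    _ = exp (-b ^ 2 / (2 * r) + k * b + b) / √(2 * π * r ^ 3) := by
        rw [exp_add, exp_add]; ring
    _ ≤ exp ((k + 1) ^ 2 * r / 2) / √(2 * π * r ^ 3) := by gcongr

lemma abs_hittingTimeDensity_mul_exp_mul_le {r : ℝ} (hr : 0 < r) (k : ℝ) {g : ℝ → ℝ} {M : ℝ}
    (hM : ∀ b ∈ Ici 0, |g b| ≤ M) {b : ℝ} (hb : 0 < b) :
    |hittingTimeDensity b r * exp (k * b) * g b|
      ≤ exp ((k + 1) ^ 2 * r / 2) / √(2 * π * r ^ 3) * M := by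
  rw [abs_mul, abs_of_pos (mul_pos (hittingTimeDensity_pos hb hr) (exp_pos _))]
  exact mul_le_mul (hittingTimeDensity_mul_exp_le hr k b) (hM b hb.le) (abs_nonneg _)
    (by positivity)

lemma continuous_intervalIntegral_lower {h : ℝ → ℝ} (hh : Continuous h) (b : ℝ) :
    Continuous fun t => ∫ u in t..b, h u :=
  (intervalIntegral.continuous_primitive (fun _ _ => hh.intervalIntegrable _ _) b).neg.congr
    fun t => (intervalIntegral.integral_symm b t).symm

lemma tendsto_toNNReal_sub_nhdsLT (τ : ℝ) :
    Tendsto (fun t => (τ - t).toNNReal) (𝓝[<] τ) (𝓝[≠] 0) := by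
  refine tendsto_nhdsWithin_of_tendsto_nhds_of_eventually_within _ ?_ ?_
  · have : Continuous fun t : ℝ => (τ - t).toNNReal := by fun_prop
    simpa using (this.tendsto τ).mono_left nhdsWithin_le_nhds
  · filter_upwards [self_mem_nhdsWithin] with t (ht : t < τ)
    simpa using ht

lemma rpow_mul_sub_exp_eq_gaussianPDFReal_sub {ε : ℝ} (hε : 0 < ε) (a b c : ℝ) :
    (2 * π * ε) ^ (-(1:ℝ) / 2) *
        (exp (-(b - a - c) ^ 2 / (2 * ε)) - exp (-(b + a - c) ^ 2 / (2 * ε)))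
      = gaussianPDFReal (a + c) ε.toNNReal b - gaussianPDFReal (c - a) ε.toNNReal b := by
  rw [show -(1:ℝ) / 2 = -(1 / 2) by norm_num, rpow_neg (by positivity), ← sqrt_eq_rpow]
  simp only [gaussianPDFReal, Real.coe_toNNReal _ hε.le]
  ring_nf

theorem stmt_15_general (f : ℝ → ℝ) (hf : ContDiff ℝ 2 f) (s : ℝ)
    (φ : ℝ → ℝ → ℝ)
    (hφ : ∀ a r : ℝ, 0 < a → 0 < r →
      φ a r = a / Real.sqrt (2 * Real.pi * r ^ 3) * Real.exp (-a ^ 2 / (2 * r)))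
    (H : ℝ → ℝ → ℝ → ℝ → ℝ)
    (hH : ∀ t a τ b : ℝ, 0 ≤ t → t < τ →
      H t a τ b = (2 * Real.pi * (τ - t)) ^ (-(1:ℝ)/2) *
        Real.exp ((1/2) * (∫ u in t..τ, (deriv f u) ^ 2) - deriv f τ * b + deriv f t * a) *
        (Real.exp (-(b - a - ∫ u in t..τ, deriv f u) ^ 2 / (2 * (τ - t)))
          - Real.exp (-(b + a - ∫ u in t..τ, deriv f u) ^ 2 / (2 * (τ - t)))))
    (G : ℝ → ℝ → ℝ → ℝ → ℝ)
    (hG : ∀ t a τ b : ℝ, 0 ≤ t → t < τ → τ < s → 0 < a → 0 < b →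
      G t a τ b = φ b (s - τ) / φ a (s - t) * H t a τ b)
    (τ : ℝ) (hτ : τ ∈ Set.Ioo 0 s) (a : ℝ) (ha : 0 < a)
    (g : ℝ → ℝ) (hg : ContinuousOn g (Set.Ici 0))
    (hgb : ∃ M : ℝ, ∀ b ∈ Set.Ici (0:ℝ), |g b| ≤ M) :
    Filter.Tendsto (fun t => ∫ b in Set.Ioi (0:ℝ), G t a τ b * g b)
      (nhdsWithin τ (Set.Ico 0 τ)) (nhds (g a)) := by
  obtain ⟨-, hτs⟩ := hτ
  obtain ⟨M, hM⟩ := hgb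
  have hsτ : 0 < s - τ := sub_pos.2 hτs
  have hd : Continuous (deriv f) := hf.continuous_deriv (by norm_num)
  set c : ℝ → ℝ := fun t => ∫ u in t..τ, deriv f u
  set β : ℝ → ℝ := fun t =>
    exp ((1/2) * (∫ u in t..τ, (deriv f u) ^ 2) + deriv f t * a) / hittingTimeDensity a (s - t)
  set w : ℝ → ℝ := fun b => hittingTimeDensity b (s - τ) * exp (-deriv f τ * b) * g b
  have key : ∀ᶠ t in 𝓝[Ico 0 τ] τ, ∫ b in Ioi 0, G t a τ b * g b = β t *
      ∫ b in Ioi 0, (gaussianPDFReal (a + c t) (τ - t).toNNReal b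
        - gaussianPDFReal (c t - a) (τ - t).toNNReal b) * w b := by
    filter_upwards [self_mem_nhdsWithin] with t ⟨ht0, htτ⟩
    rw [← integral_const_mul]
    refine setIntegral_congr_fun measurableSet_Ioi fun b (hb : 0 < b) => ?_
    rw [hG t a τ b ht0 htτ hτs ha hb, hH t a τ b ht0 htτ, sub_add_eq_add_sub, exp_sub,
      show φ b (s - τ) = hittingTimeDensity b (s - τ) from hφ b _ hb hsτ,
      show φ a (s - t) = hittingTimeDensity a (s - t) from hφ a _ ha (by linarith),
      ← rpow_mul_sub_exp_eq_gaussianPDFReal_sub (sub_pos.2 htτ)]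
    simp only [w, neg_mul, exp_neg]
    ring
  have hβ : ContinuousAt β τ := by
    refine ContinuousAt.div ?_ ?_ (hittingTimeDensity_pos ha hsτ).ne'
    · exact (continuous_exp.comp (((continuous_intervalIntegral_lower (hd.pow 2) τ).const_mul
        _).add (hd.mul continuous_const))).continuousAt
    · exact (continuousAt_hittingTimeDensity a hsτ).comp (continuousAt_const.sub continuousAt_id)
  have hw : ContinuousOn w (Ioi 0) :=
    ((continuous_hittingTimeDensity_left _).mul (by fun_prop)).continuousOn.mul
      (hg.mono Ioi_subset_Ici_self)
  have hc : Tendsto c (𝓝[Ico 0 τ] τ) (𝓝 0) := by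
    simpa using ((continuous_intervalIntegral_lower hd τ).tendsto τ).mono_left
      nhdsWithin_le_nhds
  have hv := (tendsto_toNNReal_sub_nhdsLT τ).mono_left
    (nhdsWithin_mono τ (Ico_subset_Iio_self (a := 0)))
  have hβw : β τ * w a = g a := by
    have := (hittingTimeDensity_pos ha hsτ).ne'
    simp only [β, w, intervalIntegral.integral_same, mul_zero, zero_add, neg_mul, exp_neg]
    field_simp
  rw [← hβw]
  exact ((hβ.tendsto.mono_left nhdsWithin_le_nhds).mul
    (tendsto_setIntegral_Ioi_gaussianPDFReal_sub_mul hw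
      (fun b => abs_hittingTimeDensity_mul_exp_mul_le hsτ _ hM) ha hc hv)).congr'
    (key.mono fun t ht => ht.symm)

/-- With `φ_a(r)`, `H(t,a;τ,b)` and `G(t,a;τ,b) = (φ_b(s−τ)/φ_a(s−t))·H`
as in the paper, for every `τ ∈ (0,s)`, every `a > 0`, and every bounded continuous
`g : [0,∞) → ℝ`, the integral `∫₀^∞ G(t,a;τ,b)·g(b) db` converges to `g(a)` as `t → τ⁻`
with `0 ≤ t < τ`. -/
theorem stmt_15 (f : ℝ → ℝ) (hf : ContDiff ℝ 2 f) (s : ℝ) (hs : 0 < s)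
    (φ : ℝ → ℝ → ℝ)
    (hφ : ∀ a r : ℝ, 0 < a → 0 < r →
      φ a r = a / Real.sqrt (2 * Real.pi * r ^ 3) * Real.exp (-a ^ 2 / (2 * r)))
    (H : ℝ → ℝ → ℝ → ℝ → ℝ)
    (hH : ∀ t a τ b : ℝ, 0 ≤ t → t < τ →
      H t a τ b = (2 * Real.pi * (τ - t)) ^ (-(1:ℝ)/2) *
        Real.exp ((1/2) * (∫ u in t..τ, (deriv f u) ^ 2) - deriv f τ * b + deriv f t * a) *
        (Real.exp (-(b - a - ∫ u in t..τ, deriv f u) ^ 2 / (2 * (τ - t)))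
          - Real.exp (-(b + a - ∫ u in t..τ, deriv f u) ^ 2 / (2 * (τ - t)))))
    (G : ℝ → ℝ → ℝ → ℝ → ℝ)
    (hG : ∀ t a τ b : ℝ, 0 ≤ t → t < τ → τ < s → 0 < a → 0 < b →
      G t a τ b = φ b (s - τ) / φ a (s - t) * H t a τ b)
    (τ : ℝ) (hτ : τ ∈ Set.Ioo 0 s) (a : ℝ) (ha : 0 < a)
    (g : ℝ → ℝ) (hg : ContinuousOn g (Set.Ici 0))
    (hgb : ∃ M : ℝ, ∀ b ∈ Set.Ici (0:ℝ), |g b| ≤ M) :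
    Filter.Tendsto (fun t => ∫ b in Set.Ioi (0:ℝ), G t a τ b * g b)
      (nhdsWithin τ (Set.Ico 0 τ)) (nhds (g a)) :=
  stmt_15_general f hf s φ hφ H hH G hG τ hτ a ha g hg hgb
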